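/- arXiv:1703.04450 — 5 statements merged into one kernel-verified Lean document; each statement's English description precedes it below -/
import Mathlib

section
/- Let Q be a finite quiver and D a perfect matching of Q (a set of arrows such that each unit cycle of Q contains exactly one arrow of D). If the subquiver Q \ D has a source at vertex i (i.e., every arrow with head i lies in D and some arrow has tail i), then no arrow with tail i lies in D, and the set D' obtained from D by removing all arrows with head i and adding all arrows with tail i is again a perfect matching. -/
open Classical

/-- A quiver given by tail and head maps on an arrow type. -/
structure QuiverData (V E : Type*) where
  t : E → V
  h : E → V

variable {V E V' E' : Type*}

/-- `n_D(p)`: the number of steps of the path `p` (a list of arrows, in traversal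
order) lying in the set of arrows `D`. -/
noncomputable def nD (D : Set E) (p : List E) : ℕ :=
  p.countP (fun e => decide (e ∈ D))

/-- `p` is a composable path: the head of each step is the tail of the next. -/
def IsPath (Q : QuiverData V E) (p : List E) : Prop :=
  p.Chain' (fun a b => Q.h a = Q.t b)

/-- `p` is a nonempty oriented cycle. -/
def IsCycle (Q : QuiverData V E) (p : List E) : Prop :=
  IsPath Q p ∧ p ≠ [] ∧
    ∃ a b, p.head? = some a ∧ p.getLast? = some b ∧ Q.h b = Q.t a

/-- `D` is a perfect matching with respect to the set `U` of unit cycles: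
each unit cycle contains precisely one arrow of `D`. -/
def IsPerfectMatching (U : Set (List E)) (D : Set E) : Prop :=
  ∀ c ∈ U, nD D c = 1

/-- Abstract combinatorial model of a dimer quiver: the distinguished unit
cycles are oriented cycles, and each arrow lies in exactly two unit cycles. -/
def IsDimer (Q : QuiverData V E) (U : Set (List E)) : Prop :=
  (∀ c ∈ U, IsCycle Q c) ∧ (∀ e : E, {c ∈ U | e ∈ c}.ncard = 2)

/-- The defining relations of the dimer algebra: `p ∼ q` whenever `pa` and `qa`
are unit cycles for a common arrow `a` (here the path `pa`, "first `a`, then `p`",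
is the list `a :: p`). -/
inductive DimerRel (U : Set (List E)) : List E → List E → Prop
  | base {p q : List E} {a : E} : (a :: p) ∈ U → (a :: q) ∈ U → DimerRel U p q

/-- The congruence on paths generated by a relation `R`: the smallest equivalence
relation containing `R` and compatible with concatenation of paths.
`PathEquiv R p q` models `p = q` modulo the ideal generated by `R`. -/
inductive PathEquiv (R : List E → List E → Prop) : List E → List E → Prop
  | of {p q : List E} : R p q → PathEquiv R p q
  | refl (p : List E) : PathEquiv R p p
  | symm {p q : List E} : PathEquiv R p q → PathEquiv R q p
  | trans {p q r : List E} : PathEquiv R p q → PathEquiv R q r → PathEquiv R p r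
  | mul {p q p' q' : List E} : PathEquiv R p q → PathEquiv R p' q' →
      PathEquiv R (p ++ p') (q ++ q')

/-- Two sets of arrows are equivalent perfect matchings when they assign the same
count to every cycle. -/
def MatchingEquiv (Q : QuiverData V E) (D D' : Set E) : Prop :=
  ∀ p, IsCycle Q p → nD D p = nD D' p

/-- An arrow is nonrigid if every perfect matching containing it is equivalent to
a perfect matching not containing it. -/
def NonrigidArrow (Q : QuiverData V E) (U : Set (List E)) (e : E) : Prop :=
  ∀ D, IsPerfectMatching U D → e ∈ D →
    ∃ D', IsPerfectMatching U D' ∧ MatchingEquiv Q D D' ∧ e ∉ D'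

/-- `p` is a path from `u` to `v`. -/
def PathFromTo (Q : QuiverData V E) (p : List E) (u v : V) : Prop :=
  IsPath Q p ∧ ((p = [] ∧ u = v) ∨
    ∃ a b, p.head? = some a ∧ p.getLast? = some b ∧ Q.t a = u ∧ Q.h b = v)

/-- A perfect matching `D` is simple if `Q \ D` is strongly connected. -/
def IsSimpleMatching (Q : QuiverData V E) (U : Set (List E)) (D : Set E) : Prop :=
  IsPerfectMatching U D ∧
    ∀ u v : V, ∃ p, PathFromTo Q p u v ∧ ∀ e ∈ p, e ∉ D

/-- `ρ`, `φ` present `Q'` as obtained from `Q` by contracting the arrows `e`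
with `φ e = none` to vertices. -/
def IsContractionMap (Q : QuiverData V E) (Q' : QuiverData V' E')
    (ρ : V → V') (φ : E → Option E') : Prop :=
  (∀ e e', φ e = some e' → Q'.t e' = ρ (Q.t e) ∧ Q'.h e' = ρ (Q.h e)) ∧
  (∀ e, φ e = none → ρ (Q.t e) = ρ (Q.h e)) ∧
  Function.Surjective ρ ∧ (∀ e' : E', ∃ e, φ e = some e')

/-- Endpoints of an arrow traversed forwards (`true`) or backwards (`false`). -/
def dirEnds (Q : QuiverData V E) : E × Bool → V × V
  | (e, true) => (Q.t e, Q.h e)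
  | (e, false) => (Q.h e, Q.t e)

/-- A nonempty unoriented cycle in the underlying graph of `Q`. -/
def IsUnorientedCycle (Q : QuiverData V E) (w : List (E × Bool)) : Prop :=
  w ≠ [] ∧ w.Chain' (fun x y => (dirEnds Q x).2 = (dirEnds Q y).1) ∧
    ∃ x y, w.head? = some x ∧ w.getLast? = some y ∧
      (dirEnds Q y).2 = (dirEnds Q x).1

/-- `c'` is a cyclic rotation of `c`. -/
def IsRotation (c c' : List E) : Prop := ∃ x y, c = x ++ y ∧ c' = y ++ x

/-- A unit cycle based at the vertex `i`: a cyclic rotation of a unit cycle whose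
first arrow has tail `i`. -/
def BasedUnitCycle (Q : QuiverData V E) (U : Set (List E)) (i : V)
    (c : List E) : Prop :=
  (∃ c₀ ∈ U, IsRotation c₀ c) ∧ ∃ a, c.head? = some a ∧ Q.t a = i

/-!
Along a cycle the heads of the arrows are a rotation of their tails, so every cycle contains
as many arrows with tail `i` as with head `i`. In a unit cycle the arrows with head `i` lie in
`D`, so there is at most one arrow with tail `i`. If some `b ∈ D` had tail `i`, the unique
`D`-arrow of a unit cycle through `b` would be `b` and also the arrow entering `i`, so `b` is a
loop; but the arrow after a loop again leaves `i`, so the only unit cycle through `b` is `[b]`,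
contradicting that `b` lies on two unit cycles. Then swapping the arrows entering `i` for those
leaving `i` changes the count along every cycle by `#tail - #head = 0`.
-/

section Matching

lemma nD_mono {A B : Set E} (h : A ⊆ B) (c : List E) : nD A c ≤ nD B c :=
  List.countP_mono_left fun e _ he => by simpa using h (by simpa using he)

lemma nD_union_of_disjoint {A B : Set E} (h : Disjoint A B) (c : List E) :
    nD (A ∪ B) c = nD A c + nD B c := by
  induction c with
  | nil => rfl
  | cons e c ih =>
    simp only [nD, List.countP_cons] at ih ⊢
    rw [ih]
    by_cases hA : e ∈ A
    · simp only [Set.mem_union, hA, Set.disjoint_left.1 h hA, or_false, decide_true, ↓reduceIte,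
        decide_false, Bool.false_eq_true, add_zero]
      omega
    · by_cases hB : e ∈ B <;> simp [hA, hB, Nat.add_assoc]

lemma eq_of_mem_of_nD_eq_one {D : Set E} {c : List E} (h : nD D c = 1) {a b : E}
    (ha : a ∈ c) (hb : b ∈ c) (haD : a ∈ D) (hbD : b ∈ D) : a = b := by
  rw [nD, List.countP_eq_length_filter] at h
  obtain ⟨x, hx⟩ := List.length_eq_one_iff.mp h
  have hax : a ∈ c.filter (fun e => decide (e ∈ D)) := List.mem_filter.2 ⟨ha, by simpa⟩
  have hbx : b ∈ c.filter (fun e => decide (e ∈ D)) := List.mem_filter.2 ⟨hb, by simpa⟩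
  rw [hx, List.mem_singleton] at hax hbx
  rw [hax, hbx]

end Matching

section Cycles

variable {Q : QuiverData V E}

lemma IsPath.map_h_cons {a : E} {c : List E} (hp : IsPath Q (a :: c)) :
    (a :: c).map Q.h = c.map Q.t ++ [Q.h ((a :: c).getLast (List.cons_ne_nil a c))] := by
  induction c generalizing a with
  | nil => rfl
  | cons b c ih =>
    obtain ⟨hab, hp⟩ := List.isChain_cons_cons.mp hp
    rw [List.map_cons, ih hp, hab, List.getLast_cons_cons]
    rfl

lemma IsCycle.map_h_eq_rotate {c : List E} (hc : IsCycle Q c) :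
    c.map Q.h = (c.map Q.t).rotate 1 := by
  obtain ⟨hp, -, a, b, hhd, hlast, hwrap⟩ := hc
  obtain ⟨c, rfl⟩ : ∃ c', c = a :: c' := List.head?_eq_some_iff.mp hhd
  rw [List.getLast?_eq_some_getLast (List.cons_ne_nil a c), Option.some.injEq] at hlast
  rw [hp.map_h_cons, hlast, hwrap, List.map_cons, List.rotate_cons_succ, List.rotate_zero]

lemma IsCycle.nD_t_eq_nD_h {c : List E} (hc : IsCycle Q c) (i : V) :
    nD {a | Q.t a = i} c = nD {a | Q.h a = i} c := by
  have hcount : ∀ f : E → V, nD {a | f a = i} c = (c.map f).countP (fun v => decide (v = i)) :=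
    fun f => by rw [List.countP_map]; rfl
  rw [hcount, hcount, hc.map_h_eq_rotate, ((c.map Q.t).rotate_perm 1).countP_eq]

lemma IsCycle.two_le_nD_of_loop {c : List E} (hc : IsCycle Q c) {b : E} {i : V}
    (hb : b ∈ c) (ht : Q.t b = i) (hh : Q.h b = i) (hne : c ≠ [b]) :
    2 ≤ nD {a | Q.t a = i} c := by
  obtain ⟨x, y, rfl⟩ := List.append_of_mem hb
  -- the arrow following the loop `b` around the cycle also starts at `i`
  obtain ⟨b', hb', hbb'⟩ : ∃ b', (b' ∈ x ∨ b' ∈ y) ∧ Q.t b' = i := by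
    rcases y with _ | ⟨b', y⟩
    · obtain ⟨e, x, rfl⟩ := List.exists_cons_of_ne_nil (show x ≠ [] by rintro rfl; exact hne rfl)
      obtain ⟨-, -, a₀, b₀, hhd, hlast, hwrap⟩ := hc
      simp only [List.cons_append, List.head?_cons, Option.some.injEq] at hhd
      rw [List.getLast?_concat, Option.some.injEq] at hlast
      exact ⟨e, .inl List.mem_cons_self, by rw [hhd, ← hwrap, ← hlast, hh]⟩
    · have hbb' := (List.isChain_cons_cons.mp (List.isChain_append.mp hc.1).2.1).1
      exact ⟨b', .inr List.mem_cons_self, by rw [← hbb', hh]⟩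
  have hpos : ∀ l : List E, b' ∈ l → 1 ≤ nD {a | Q.t a = i} l :=
    fun l hl => List.countP_pos_iff.2 ⟨b', hl, by simpa using hbb'⟩
  simp only [nD, Set.mem_ofPred_eq, List.countP_append, List.countP_cons] at hpos ⊢
  rcases hb' with hb' | hb'
  · have := hpos x hb'; simp only [ht, decide_true, ↓reduceIte]; omega
  · have := hpos y hb'; simp only [ht, decide_true, ↓reduceIte]; omega

end Cycles

section Source

variable {Q : QuiverData V E} {D : Set E} {i : V}

lemma IsCycle.nD_tail_le_one {c : List E} (hc : IsCycle Q c) (hcD : nD D c = 1)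
    (hin : ∀ a : E, Q.h a = i → a ∈ D) : nD {a | Q.t a = i} c ≤ 1 :=
  calc nD {a | Q.t a = i} c = nD {a | Q.h a = i} c := hc.nD_t_eq_nD_h i
    _ ≤ nD D c := nD_mono hin c
    _ = 1 := hcD

lemma IsCycle.h_eq_of_t_eq {c : List E} (hc : IsCycle Q c) (hcD : nD D c = 1)
    (hin : ∀ a : E, Q.h a = i → a ∈ D) {b : E} (hb : b ∈ c) (hbD : b ∈ D)
    (ht : Q.t b = i) : Q.h b = i := by
  have hpos : 0 < nD {a | Q.h a = i} c := by
    rw [← hc.nD_t_eq_nD_h i]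
    exact List.countP_pos_iff.2 ⟨b, hb, by simpa using ht⟩
  obtain ⟨a, ha, hai⟩ := List.countP_pos_iff.1 hpos
  have hai : Q.h a = i := by simpa using hai
  rwa [← eq_of_mem_of_nD_eq_one hcD ha hb (hin a hai) hbD]

theorem not_mem_of_t_eq_of_h_eq_mem {U : Set (List E)} (hdimer : IsDimer Q U)
    (hD : IsPerfectMatching U D) (hin : ∀ a : E, Q.h a = i → a ∈ D) {b : E}
    (ht : Q.t b = i) : b ∉ D := by
  intro hbD
  obtain ⟨hcyc, hcard⟩ := hdimer
  obtain ⟨c₀, hc₀U, hbc₀⟩ :=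
    Set.nonempty_of_ncard_ne_zero (by rw [hcard b]; omega : {c ∈ U | b ∈ c}.ncard ≠ 0)
  have hh : Q.h b = i := (hcyc c₀ hc₀U).h_eq_of_t_eq (hD c₀ hc₀U) hin hbc₀ hbD ht
  have hsub : {c ∈ U | b ∈ c} ⊆ {[b]} := by
    rintro c ⟨hcU, hbc⟩
    by_contra hne
    have := (hcyc c hcU).two_le_nD_of_loop hbc ht hh hne
    have := (hcyc c hcU).nD_tail_le_one (hD c hcU) hin
    omega
  have := Set.ncard_le_ncard hsub (Set.finite_singleton _)
  rw [Set.ncard_singleton, hcard b] at this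
  omega

lemma IsCycle.nD_diff_union_eq {c : List E} (hc : IsCycle Q c)
    (hin : ∀ a : E, Q.h a = i → a ∈ D) (hout : ∀ b : E, Q.t b = i → b ∉ D) :
    nD ((D \ {a | Q.h a = i}) ∪ {a | Q.t a = i}) c = nD D c := by
  have hunion : ((D \ {a | Q.h a = i}) ∪ {a | Q.t a = i}) ∪ {a | Q.h a = i}
      = D ∪ {a | Q.t a = i} := by
    ext e
    have := hin e
    have := hout e
    simp only [Set.mem_union, Set.mem_sdiff, Set.mem_ofPred_eq]
    tauto
  have hdisj₁ : Disjoint ((D \ {a | Q.h a = i}) ∪ {a | Q.t a = i}) {a | Q.h a = i} := by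
    refine Set.disjoint_left.2 fun e he he' => ?_
    rcases he with ⟨-, he⟩ | he
    · exact he he'
    · exact hout e he (hin e he')
  have hdisj₂ : Disjoint D {a | Q.t a = i} :=
    Set.disjoint_left.2 fun e he he' => hout e he' he
  have hsum := congrArg (nD · c) hunion
  rw [nD_union_of_disjoint hdisj₁, nD_union_of_disjoint hdisj₂, hc.nD_t_eq_nD_h i] at hsum
  omega

end Source

theorem stmt0_general (Q : QuiverData V E) (U : Set (List E))
    (hdimer : IsDimer Q U) (D : Set E) (hD : IsPerfectMatching U D) (i : V)
    (hin : ∀ a : E, Q.h a = i → a ∈ D) :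
    (∀ b : E, Q.t b = i → b ∉ D) ∧
      IsPerfectMatching U
        ((D \ {a : E | Q.h a = i}) ∪ {a : E | Q.t a = i}) := by
  have hout : ∀ b : E, Q.t b = i → b ∉ D :=
    fun _ => not_mem_of_t_eq_of_h_eq_mem hdimer hD hin
  refine ⟨hout, fun c hc => ?_⟩
  rw [(hdimer.1 c hc).nD_diff_union_eq hin hout]
  exact hD c hc

/-- If a perfect matching `D` has a source of `Q \ D` at the vertex
`i` (every arrow with head `i` lies in `D`, and some arrow has tail `i`), then no
arrow with tail `i` lies in `D`, and replacing in `D` the arrows with head `i` by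
the arrows with tail `i` yields again a perfect matching. -/
theorem stmt0 [Fintype V] [Fintype E] (Q : QuiverData V E) (U : Set (List E))
    (hdimer : IsDimer Q U) (D : Set E) (hD : IsPerfectMatching U D) (i : V)
    (hin : ∀ a : E, Q.h a = i → a ∈ D) (hout : ∃ a : E, Q.t a = i) :
    (∀ b : E, Q.t b = i → b ∉ D) ∧
      IsPerfectMatching U
        ((D \ {a : E | Q.h a = i}) ∪ {a : E | Q.t a = i}) :=
  stmt0_general Q U hdimer D hD i hin
end

section
/- Let D be a perfect matching of a dimer quiver Q that is not simple, i.e., the representation with support Q \ D is not simple. Let S be the supporting subquiver of a proper simple submodule, let α be the set of arrows outside S with tail in S, and β the set of arrows outside S with head in S. Then α ⊆ D, and D' := (D \ α) ∪ β is again a perfect matching of Q. -/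
open Classical

variable {V E V' E' : Type*}

/-!
Give each vertex the potential `1` on `SV` and `0` off it. Around any cycle the potential
differences of the arrows telescope to zero, so a cycle leaves `SV` as often as it enters it.
Arrows leaving `SV` lie in `D` by closedness, so a unit cycle, which has a single arrow of `D`,
cannot enter `SV` through an arrow of `D`: it would need a second arrow of `D` to leave again.
On all remaining arrows `1_{D'} - 1_D` is exactly the potential difference, hence
`n_{D'}(c) = n_D(c) = 1`.
-/

theorem IsPath.sum_map_sub_eq {G : Type*} [AddCommGroup G] {Q : QuiverData V E} (f : V → G)
    {a : E} {p : List E} (hp : IsPath Q (a :: p)) :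
    ((a :: p).map fun e => f (Q.h e) - f (Q.t e)).sum =
      f (Q.h ((a :: p).getLast (List.cons_ne_nil a p))) - f (Q.t a) := by
  induction p generalizing a with
  | nil => simp
  | cons b p ih =>
    obtain ⟨hab, hp⟩ := List.isChain_cons_cons.mp hp
    rw [List.map_cons, List.sum_cons, ih hp, List.getLast_cons_cons, hab]
    abel

theorem IsCycle.sum_map_sub_eq_zero {G : Type*} [AddCommGroup G] {Q : QuiverData V E}
    {c : List E} (hc : IsCycle Q c) (f : V → G) :
    (c.map fun e => f (Q.h e) - f (Q.t e)).sum = 0 := by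
  obtain ⟨hpath, -, a, b, ha, hb, hba⟩ := hc
  obtain ⟨p, rfl⟩ := List.head?_eq_some_iff.mp ha
  rw [List.getLast?_eq_some_getLast (List.cons_ne_nil a p), Option.some.injEq] at hb
  rw [hpath.sum_map_sub_eq, hb, hba, sub_self]

theorem natCast_nD_eq_sum (D : Set E) (p : List E) :
    (nD D p : ℤ) = (p.map fun e => if e ∈ D then 1 else 0).sum := by
  induction p with
  | nil => simp [nD]
  | cons e p ih =>
    rw [List.map_cons, List.sum_cons, ← ih, nD, List.countP_cons, ← nD]
    split_ifs <;> simp_all [add_comm]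

theorem two_le_nD {D : Set E} {p : List E} {e e' : E} (he : e ∈ p) (he' : e' ∈ p)
    (hne : e ≠ e') (heD : e ∈ D) (he'D : e' ∈ D) : 2 ≤ nD D p := by
  calc 2 = ({e, e'} : Finset E).card := (Finset.card_pair hne).symm
    _ ≤ (p.filter fun x => decide (x ∈ D)).toFinset.card :=
        Finset.card_le_card (by intro x; simp only [Finset.mem_insert, Finset.mem_singleton,
          List.mem_toFinset, List.mem_filter, decide_eq_true_eq]; rintro (rfl | rfl) <;> simp [*])
    _ ≤ (p.filter fun x => decide (x ∈ D)).length := List.toFinset_card_le _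
    _ = nD D p := (List.countP_eq_length_filter ..).symm

section Closed

variable {Q : QuiverData V E} {SV : Set V} {D : Set E}

theorem IsCycle.tail_mem_of_head_mem (hclosed : ∀ a : E, a ∉ D → Q.t a ∈ SV → Q.h a ∈ SV)
    {c : List E} (hc : IsCycle Q c) (h1 : nD D c = 1) {e : E} (he : e ∈ c) (heD : e ∈ D)
    (hh : Q.h e ∈ SV) : Q.t e ∈ SV := by
  by_contra ht
  let g : E → ℤ := fun e => (if Q.h e ∈ SV then 1 else 0) - (if Q.t e ∈ SV then 1 else 0)
  obtain ⟨e', he', hneg⟩ : ∃ e' ∈ c, g e' < 0 := by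
    by_contra! hnonneg
    have hle := List.single_le_sum (by simpa using hnonneg) (g e) (List.mem_map_of_mem he)
    rw [show (c.map g).sum = 0 from hc.sum_map_sub_eq_zero fun v => if v ∈ SV then 1 else 0] at hle
    simp [g, hh, ht] at hle
  obtain ⟨ht', hh'⟩ : Q.t e' ∈ SV ∧ Q.h e' ∉ SV := by
    simp only [g] at hneg
    split_ifs at hneg <;> simp_all
  have he'D : e' ∈ D := by by_contra h; exact hh' (hclosed e' h ht')
  have := two_le_nD he he' (by rintro rfl; exact ht ht') heD he'D
  omega

/-- The matching `D' = (D \ α) ∪ β`. -/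
def shiftMatching (Q : QuiverData V E) (SV : Set V) (D : Set E) : Set E :=
  (D \ {a : E | Q.t a ∈ SV ∧ ¬(a ∉ D ∧ Q.t a ∈ SV ∧ Q.h a ∈ SV)}) ∪
    {a : E | Q.h a ∈ SV ∧ ¬(a ∉ D ∧ Q.t a ∈ SV ∧ Q.h a ∈ SV)}

theorem ite_mem_shiftMatching (hclosed : ∀ a : E, a ∉ D → Q.t a ∈ SV → Q.h a ∈ SV) {e : E}
    (hentering : e ∈ D → Q.h e ∈ SV → Q.t e ∈ SV) :
    (if e ∈ shiftMatching Q SV D then 1 else 0 : ℤ) = (if e ∈ D then 1 else 0) +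
      ((if Q.h e ∈ SV then 1 else 0) - (if Q.t e ∈ SV then 1 else 0)) := by
  by_cases heD : e ∈ D <;> by_cases ht : Q.t e ∈ SV <;> by_cases hh : Q.h e ∈ SV <;>
    simp_all [shiftMatching]

end Closed

theorem stmt4_general (Q : QuiverData V E) (U : Set (List E))
    (hdimer : IsDimer Q U) (D : Set E) (hD : IsPerfectMatching U D)
    (SV : Set V)
    (hclosed : ∀ a : E, a ∉ D → Q.t a ∈ SV → Q.h a ∈ SV) :
    {a : E | Q.t a ∈ SV ∧ ¬(a ∉ D ∧ Q.t a ∈ SV ∧ Q.h a ∈ SV)} ⊆ D ∧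
    IsPerfectMatching U
      ((D \ {a : E | Q.t a ∈ SV ∧ ¬(a ∉ D ∧ Q.t a ∈ SV ∧ Q.h a ∈ SV)}) ∪
        {a : E | Q.h a ∈ SV ∧ ¬(a ∉ D ∧ Q.t a ∈ SV ∧ Q.h a ∈ SV)}) := by
  refine ⟨fun a ⟨ht, hnot⟩ => by_contra fun ha => hnot ⟨ha, ht, hclosed a ha ht⟩, fun c hc => ?_⟩
  have hcycle := hdimer.1 c hc
  have hcount : (nD (shiftMatching Q SV D) c : ℤ) = nD D c := by
    rw [natCast_nD_eq_sum, natCast_nD_eq_sum, List.map_congr_left fun e he =>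
      ite_mem_shiftMatching hclosed (hcycle.tail_mem_of_head_mem hclosed (hD c hc) he),
      List.sum_map_add,
      hcycle.sum_map_sub_eq_zero fun v => if v ∈ SV then 1 else 0, add_zero]
  exact_mod_cast hcount.trans (congrArg _ (hD c hc))

/-- let `D` be a non-simple perfect matching, `SV` the vertex set of
the supporting subquiver `S` of a proper simple submodule (a nonempty proper set
of vertices closed under successors within `Q \ D`; the arrows of `S` are the
arrows of `Q \ D` with both ends in `SV`).  With `α` the arrows outside `S` with
tail in `S` and `β` the arrows outside `S` with head in `S`, we have `α ⊆ D` and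
`D' = (D \ α) ∪ β` is again a perfect matching. -/
theorem stmt4 [Fintype V] [Fintype E] (Q : QuiverData V E) (U : Set (List E))
    (hdimer : IsDimer Q U) (D : Set E) (hD : IsPerfectMatching U D)
    (SV : Set V) (hne : SV.Nonempty) (hproper : SV ≠ Set.univ)
    (hclosed : ∀ a : E, a ∉ D → Q.t a ∈ SV → Q.h a ∈ SV) :
    {a : E | Q.t a ∈ SV ∧ ¬(a ∉ D ∧ Q.t a ∈ SV ∧ Q.h a ∈ SV)} ⊆ D ∧
    IsPerfectMatching U
      ((D \ {a : E | Q.t a ∈ SV ∧ ¬(a ∉ D ∧ Q.t a ∈ SV ∧ Q.h a ∈ SV)}) ∪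
        {a : E | Q.h a ∈ SV ∧ ¬(a ∉ D ∧ Q.t a ∈ SV ∧ Q.h a ∈ SV)}) :=
  stmt4_general Q U hdimer D hD SV hclosed
end

section
/- With the notation of the previous statement (D a non-simple perfect matching, S the support of a simple submodule, α and β the exiting and entering arrow sets, and D' = (D \ α) ∪ β), the perfect matchings D and D' are equivalent: for every cycle p in Q, n_D(p) = n_{D'}(p). The key combinatorial fact is that any cycle enters the subquiver S the same number of times as it exits it. -/
open Classical

variable {V E V' E' : Type*}

/-! Let `f` be the indicator of `S` on vertices. Along a cycle `Σ f (t e) = Σ f (h e)`, since the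
cycle enters `S` as often as it leaves it. Arrows outside `D` never leave `S`; on a unit cycle
through `a ∈ D`, all other arrows avoid `D`, so `a` cannot enter `S` either. Hence
`1_{D'} e + f (t e) = 1_D e + f (h e)` for every arrow `e`, and summing over a cycle gives
`n_{D'}(p) = n_D(p)`. -/

section

variable (Q : QuiverData V E)

theorem IsPath.sum_map_tail_add {M : Type*} [AddCommMonoid M] (f : V → M) :
    ∀ {p : List E} {a b : E}, IsPath Q p → p.head? = some a → p.getLast? = some b →
      (p.map (f ∘ Q.t)).sum + f (Q.h b) = (p.map (f ∘ Q.h)).sum + f (Q.t a)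
  | [], _, _, _, ha, _ => by simp at ha
  | [x], a, b, _, ha, hb => by
    obtain rfl : x = a := by simpa using ha
    obtain rfl : x = b := by simpa using hb
    simp [add_comm]
  | x :: y :: p, a, b, hp, ha, hb => by
    obtain rfl : x = a := by simpa using ha
    obtain ⟨hxy, hp⟩ := List.isChain_cons_cons.mp hp
    have ih := IsPath.sum_map_tail_add f hp rfl (by simpa using hb)
    simp only [List.map_cons, List.sum_cons, Function.comp_apply] at ih ⊢
    rw [add_assoc, ih, hxy]
    abel

theorem IsCycle.sum_map_tail_eq {M : Type*} [AddCancelCommMonoid M] (f : V → M) {p : List E}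
    (hp : IsCycle Q p) : (p.map (f ∘ Q.t)).sum = (p.map (f ∘ Q.h)).sum := by
  obtain ⟨hpath, -, a, b, ha, hb, hba⟩ := hp
  have := hpath.sum_map_tail_add Q f ha hb
  rwa [hba, add_left_inj] at this

theorem IsCycle.tail_mem_of_head_mem_s5 {S : Set V} {x y : List E} {a : E}
    (hc : IsCycle Q (x ++ a :: y)) (hS : ∀ e ∈ x ++ y, Q.t e ∈ S → Q.h e ∈ S)
    (ha : Q.h a ∈ S) : Q.t a ∈ S := by
  have hbal := hc.sum_map_tail_eq Q (S.indicator 1 : V → ℕ)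
  have hle : ∀ e ∈ x ++ y,
      (S.indicator (1 : V → ℕ) ∘ Q.t) e ≤ (S.indicator 1 ∘ Q.h) e := by
    intro e he
    by_cases ht : Q.t e ∈ S
    · simp [ht, hS e he ht]
    · simp [ht]
  have hx := List.sum_le_sum fun e he => hle e (List.mem_append_left y he)
  have hy := List.sum_le_sum fun e he => hle e (List.mem_append_right x he)
  simp only [List.map_append, List.map_cons, List.sum_append, List.sum_cons,
    Function.comp_apply] at hbal
  by_contra ht
  simp only [Set.indicator_of_mem ha, Set.indicator_of_notMem ht, Pi.one_apply] at hbal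
  omega

theorem nD_eq_sum_indicator (D : Set E) (p : List E) :
    nD D p = (p.map (D.indicator 1)).sum := by
  induction p with
  | nil => rfl
  | cons e p ih =>
    by_cases he : e ∈ D <;> simp_all [nD, add_comm]

theorem matchingEquiv_of_indicator_add {D D' : Set E} (f : V → ℕ)
    (hf : ∀ e, D'.indicator 1 e + f (Q.t e) = D.indicator 1 e + f (Q.h e)) :
    MatchingEquiv Q D D' := by
  intro p hp
  have hsum : (p.map (D'.indicator 1)).sum + (p.map (f ∘ Q.t)).sum
      = (p.map (D.indicator 1)).sum + (p.map (f ∘ Q.h)).sum := by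
    rw [← List.sum_map_add, ← List.sum_map_add]
    exact congrArg List.sum (List.map_congr_left fun e _ => hf e)
  rw [nD_eq_sum_indicator, nD_eq_sum_indicator, hp.sum_map_tail_eq Q f] at *
  omega

theorem IsPerfectMatching.exists_unit_cycle {U : Set (List E)} {D : Set E}
    (hD : IsPerfectMatching U D) (hU : ∀ e : E, {c ∈ U | e ∈ c}.ncard = 2) {a : E}
    (ha : a ∈ D) : ∃ x y, x ++ a :: y ∈ U ∧ ∀ e ∈ x ++ y, e ∉ D := by
  obtain ⟨c, hcU, hac⟩ : {c ∈ U | a ∈ c}.Nonempty :=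
    Set.nonempty_of_ncard_ne_zero (by rw [hU a]; norm_num)
  obtain ⟨x, y, rfl⟩ := List.append_of_mem hac
  refine ⟨x, y, hcU, fun e he heD => ?_⟩
  have hone := hD _ hcU
  have hpos : 0 < nD D (x ++ y) := List.countP_pos_iff.mpr ⟨e, he, by simpa using heD⟩
  simp only [nD, List.countP_append, List.countP_cons, ha, decide_true, ↓reduceIte]
    at hone hpos
  omega

theorem IsPerfectMatching.tail_mem_of_head_mem_s5 {U : Set (List E)} {D : Set E} {S : Set V}
    (hdimer : IsDimer Q U) (hD : IsPerfectMatching U D)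
    (hclosed : ∀ a : E, a ∉ D → Q.t a ∈ S → Q.h a ∈ S) {a : E} (ha : a ∈ D)
    (hh : Q.h a ∈ S) : Q.t a ∈ S := by
  obtain ⟨x, y, hU, hxy⟩ := hD.exists_unit_cycle hdimer.2 ha
  exact (hdimer.1 _ hU).tail_mem_of_head_mem_s5 Q (fun e he => hclosed e (hxy e he)) hh

def swapMatching (D : Set E) (S : Set V) : Set E :=
  (D \ {a : E | Q.t a ∈ S ∧ ¬(a ∉ D ∧ Q.t a ∈ S ∧ Q.h a ∈ S)}) ∪
    {a : E | Q.h a ∈ S ∧ ¬(a ∉ D ∧ Q.t a ∈ S ∧ Q.h a ∈ S)}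

theorem indicator_swapMatching_add {D : Set E} {S : Set V} {e : E}
    (hexit : e ∉ D → Q.t e ∈ S → Q.h e ∈ S) (henter : e ∈ D → Q.h e ∈ S → Q.t e ∈ S) :
    (swapMatching Q D S).indicator 1 e + S.indicator 1 (Q.t e)
      = D.indicator 1 e + S.indicator (1 : V → ℕ) (Q.h e) := by
  by_cases he : e ∈ D <;> by_cases ht : Q.t e ∈ S <;> by_cases hh : Q.h e ∈ S <;>
    simp_all [swapMatching]

end

theorem stmt5_general (Q : QuiverData V E) (U : Set (List E))
    (hdimer : IsDimer Q U) (D : Set E) (hD : IsPerfectMatching U D)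
    (SV : Set V)
    (hclosed : ∀ a : E, a ∉ D → Q.t a ∈ SV → Q.h a ∈ SV) :
    MatchingEquiv Q D
      ((D \ {a : E | Q.t a ∈ SV ∧ ¬(a ∉ D ∧ Q.t a ∈ SV ∧ Q.h a ∈ SV)}) ∪
        {a : E | Q.h a ∈ SV ∧ ¬(a ∉ D ∧ Q.t a ∈ SV ∧ Q.h a ∈ SV)}) :=
  matchingEquiv_of_indicator_add Q (SV.indicator 1) fun e =>
    indicator_swapMatching_add Q (hclosed e) (hD.tail_mem_of_head_mem_s5 Q hdimer hclosed)

/-- in the setting of the source/submodule swap (`D` a non-simple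
perfect matching, `SV` the vertex set of the supporting subquiver of a proper
simple submodule, `α`/`β` the exiting/entering arrow sets, `D' = (D \ α) ∪ β`),
the perfect matchings `D` and `D'` are equivalent: `n_D(p) = n_{D'}(p)` for
every cycle `p` in `Q`. -/
theorem stmt5 [Fintype V] [Fintype E] (Q : QuiverData V E) (U : Set (List E))
    (hdimer : IsDimer Q U) (D : Set E) (hD : IsPerfectMatching U D)
    (SV : Set V) (hne : SV.Nonempty) (hproper : SV ≠ Set.univ)
    (hclosed : ∀ a : E, a ∉ D → Q.t a ∈ SV → Q.h a ∈ SV) :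
    MatchingEquiv Q D
      ((D \ {a : E | Q.t a ∈ SV ∧ ¬(a ∉ D ∧ Q.t a ∈ SV ∧ Q.h a ∈ SV)}) ∪
        {a : E | Q.h a ∈ SV ∧ ¬(a ∉ D ∧ Q.t a ∈ SV ∧ Q.h a ∈ SV)}) :=
  stmt5_general Q U hdimer D hD SV hclosed
end

section
/- Let Q be a quiver and Q' obtained from Q by contracting a single arrow δ that is not a loop. Then the induced map on cycles is well defined: the image of any cycle of Q is a cycle of Q' (of length one less if the cycle passes through δ), and no cycle of positive length in Q maps to a trivial path unless it equals δ itself. -/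
/-!
Read a cycle as a closed path `u → u`. Contraction sends a path `u → v` of `Q` to a path
`ρ u → ρ v` of `Q'`: a surviving arrow keeps its endpoints up to `ρ`, and the contracted
arrow `δ` is dropped while `ρ` glues its endpoints. So the image of a cycle is a closed path,
hence a cycle as soon as it is nonempty; it loses exactly the occurrences of `δ`. It cannot be
empty: a cycle made of copies of `δ` alone would force `Q.t δ = Q.h δ`.
-/

open Classical

variable {V E V' E' : Type*}

theorem isPath_nil (Q : QuiverData V E) : IsPath Q [] := List.isChain_nil

theorem isPath_singleton (Q : QuiverData V E) (e : E) : IsPath Q [e] := List.isChain_singleton e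

theorem isPath_cons_cons (Q : QuiverData V E) (a b : E) (p : List E) :
    IsPath Q (a :: b :: p) ↔ Q.h a = Q.t b ∧ IsPath Q (b :: p) :=
  List.isChain_cons_cons

theorem pathFromTo_nil_iff (Q : QuiverData V E) (u v : V) :
    PathFromTo Q [] u v ↔ u = v := by
  simp [PathFromTo, isPath_nil]

theorem pathFromTo_cons_iff (Q : QuiverData V E) (e : E) (p : List E) (u v : V) :
    PathFromTo Q (e :: p) u v ↔ Q.t e = u ∧ PathFromTo Q p (Q.h e) v := by
  cases p with
  | nil => simp [PathFromTo, isPath_singleton, isPath_nil]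
  | cons a q =>
    simp only [PathFromTo, isPath_cons_cons, List.head?_cons, List.getLast?_cons_cons,
      Option.some.injEq, reduceCtorEq, false_and, false_or]
    grind

theorem isCycle_iff_pathFromTo (Q : QuiverData V E) (p : List E) :
    IsCycle Q p ↔ p ≠ [] ∧ ∃ u, PathFromTo Q p u u := by
  constructor
  · rintro ⟨hpath, hne, a, b, ha, hb, hba⟩
    exact ⟨hne, Q.t a, hpath, Or.inr ⟨a, b, ha, hb, rfl, hba⟩⟩
  · rintro ⟨hne, u, hpath, ⟨hnil, -⟩ | ⟨a, b, ha, hb, rfl, hbu⟩⟩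
    · exact absurd hnil hne
    · exact ⟨hpath, hne, a, b, ha, hb, hbu⟩

theorem PathFromTo.filterMap {Q : QuiverData V E} {Q' : QuiverData V' E'} {ρ : V → V'}
    {φ : E → Option E'}
    (hsome : ∀ e e', φ e = some e' → Q'.t e' = ρ (Q.t e) ∧ Q'.h e' = ρ (Q.h e))
    (hnone : ∀ e, φ e = none → ρ (Q.t e) = ρ (Q.h e)) {p : List E} {u v : V}
    (hp : PathFromTo Q p u v) : PathFromTo Q' (p.filterMap φ) (ρ u) (ρ v) := by
  induction p generalizing u with
  | nil => exact (pathFromTo_nil_iff Q' _ _).2 (congrArg ρ ((pathFromTo_nil_iff Q u v).1 hp))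
  | cons e p ih =>
    obtain ⟨rfl, hrest⟩ := (pathFromTo_cons_iff Q e p u v).1 hp
    cases he : φ e with
    | none => simpa [he, hnone e he] using ih hrest
    | some e' =>
      obtain ⟨ht, hh⟩ := hsome e e' he
      simpa [he, pathFromTo_cons_iff, ht, hh] using ih hrest

theorem IsCycle.filterMap {Q : QuiverData V E} {Q' : QuiverData V' E'} {ρ : V → V'}
    {φ : E → Option E'}
    (hsome : ∀ e e', φ e = some e' → Q'.t e' = ρ (Q.t e) ∧ Q'.h e' = ρ (Q.h e))
    (hnone : ∀ e, φ e = none → ρ (Q.t e) = ρ (Q.h e)) {p : List E}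
    (hp : IsCycle Q p) (hne : p.filterMap φ ≠ []) : IsCycle Q' (p.filterMap φ) := by
  obtain ⟨-, u, hu⟩ := (isCycle_iff_pathFromTo Q p).1 hp
  exact (isCycle_iff_pathFromTo Q' _).2 ⟨hne, ρ u, hu.filterMap hsome hnone⟩

theorem IsCycle.loop_of_forall_eq {Q : QuiverData V E} {p : List E} {δ : E}
    (hp : IsCycle Q p) (hδ : ∀ e ∈ p, e = δ) : Q.t δ = Q.h δ := by
  obtain ⟨hne, u, hu⟩ := (isCycle_iff_pathFromTo Q p).1 hp
  obtain ⟨e, q, rfl⟩ := List.exists_cons_of_ne_nil hne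
  obtain rfl := hδ e List.mem_cons_self
  obtain ⟨rfl, hq⟩ := (pathFromTo_cons_iff Q e q u u).1 hu
  cases q with
  | nil => exact ((pathFromTo_nil_iff Q _ _).1 hq).symm
  | cons e' q =>
    obtain rfl := hδ e' (by simp)
    exact ((pathFromTo_cons_iff Q e' q _ _).1 hq).1

theorem length_filterMap_of_none_iff {α β : Type*} {φ : α → Option β} {δ : α}
    (hδ : ∀ e, φ e = none ↔ e = δ) (p : List α) :
    (p.filterMap φ).length = p.length - p.countP (fun e => decide (e = δ)) := by
  have hkeep : ∀ e, (φ e).isSome = decide ¬(decide (e = δ)) = true := by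
    intro e
    simp only [← hδ e]
    cases φ e <;> rfl
  rw [List.length_filterMap_eq_countP, List.length_eq_countP_add_countP (fun e => decide (e = δ)),
    List.countP_congr (fun e _ => by rw [hkeep e])]
  omega

theorem stmt11_general (Q : QuiverData V E) (Q' : QuiverData V' E')
    (ρ : V → V') (φ : E → Option E') (hc : IsContractionMap Q Q' ρ φ)
    (δ : E) (hδ : ∀ e, φ e = none ↔ e = δ)
    (hloop : Q.t δ ≠ Q.h δ) :
    (∀ p, IsCycle Q p → IsCycle Q' (p.filterMap φ) ∧
      (p.filterMap φ).length = p.length - p.countP (fun e => decide (e = δ))) ∧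
    (∀ p, IsCycle Q p → p.filterMap φ = [] → p = [δ]) := by
  obtain ⟨hsome, hnone, -, -⟩ := hc
  have hne : ∀ p, IsCycle Q p → p.filterMap φ ≠ [] := fun p hp hnil =>
    hloop (hp.loop_of_forall_eq fun e he => (hδ e).1 (List.filterMap_eq_nil_iff.1 hnil e he))
  exact ⟨fun p hp => ⟨hp.filterMap hsome hnone (hne p hp), length_filterMap_of_none_iff hδ p⟩,
    fun p hp hnil => (hne p hp hnil).elim⟩

/-- contracting a single non-loop arrow `δ` of a quiver `Q`
induces a well-defined map on cycles: the image of a cycle of `Q` is a cycle of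
`Q'`, of length reduced by the number of passes through `δ` (one less if the
cycle passes through `δ` once), and no cycle of positive length maps to a
trivial path unless it equals `δ` itself. -/
theorem stmt11 (Q : QuiverData V E) (Q' : QuiverData V' E')
    (ρ : V → V') (φ : E → Option E') (hc : IsContractionMap Q Q' ρ φ)
    (δ : E) (hδ : ∀ e, φ e = none ↔ e = δ)
    (hinj : ∀ e₁ e₂ e', φ e₁ = some e' → φ e₂ = some e' → e₁ = e₂)
    (hρ : ∀ x y : V, ρ x = ρ y ↔ x = y ∨ ({x, y} : Set V) = {Q.t δ, Q.h δ})
    (hloop : Q.t δ ≠ Q.h δ) :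
    (∀ p, IsCycle Q p → IsCycle Q' (p.filterMap φ) ∧
      (p.filterMap φ).length = p.length - p.countP (fun e => decide (e = δ))) ∧
    (∀ p, IsCycle Q p → p.filterMap φ = [] → p = [δ]) :=
  stmt11_general Q Q' ρ φ hc δ hδ hloop
end

section
/- Let ψ: A → A' be a contraction of dimer algebras. Then the induced map on cycles is multiplicative with respect to perfect-matching counts: for every perfect matching D' of Q' and every path p of Q, n_{D'}(ψ(p)) = n_{ψ⁻¹(D')}(p), where ψ⁻¹(D') is the set of arrows of Q mapping to arrows of D'. In particular, the τψ-image of any cycle of Q lies in the cycle algebra S' of A', giving the inclusion S ⊆ S'. -/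
open Classical

variable {V E V' E' : Type*}

/-- The monomial `τ̄(q) = ∏_{D simple} x_D^{n_D(q)}` associated to a path `q`. -/
noncomputable def taubar (Q' : QuiverData V' E') (U' : Set (List E'))
    (k : Type*) [CommSemiring k] [Finite E'] (q : List E') :
    MvPolynomial {D : Set E' // IsSimpleMatching Q' U' D} k :=
  MvPolynomial.monomial
    (Finsupp.equivFunOnFinite.symm (fun D => nD D.1 q)) 1

lemma nD_filterMap (D' : Set E') (φ : E → Option E') (p : List E) :
    nD D' (p.filterMap φ) = nD {e : E | ∃ e' ∈ D', φ e = some e'} p := by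
  induction p with
  | nil => rfl
  | cons e p ih =>
    unfold nD at *
    rcases he : φ e with _ | e'
    · rw [List.filterMap_cons_none he, List.countP_cons, ih]
      simp [he]
    · rw [List.filterMap_cons_some he, List.countP_cons, List.countP_cons, ih]
      congr 1
      by_cases h : e' ∈ D' <;> simp [h, he]

lemma pathFromTo_filterMap (Q : QuiverData V E) (Q' : QuiverData V' E')
    (ρ : V → V') (φ : E → Option E') (hc : IsContractionMap Q Q' ρ φ) :
    ∀ (p : List E) (u v : V), PathFromTo Q p u v →
      PathFromTo Q' (p.filterMap φ) (ρ u) (ρ v) := by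
  intro p
  induction p with
  | nil =>
    intro u v hp
    rcases hp.2 with ⟨_, huv⟩ | ⟨a, b, ha, _⟩
    · exact ⟨List.isChain_nil, Or.inl ⟨rfl, by rw [huv]⟩⟩
    · simp at ha
  | cons e p ih =>
    intro u v hp
    rcases hp.2 with ⟨h1, _⟩ | ⟨a, b, ha, hb, hta, hhb⟩
    · simp at h1
    · have hae : e = a := by simpa using ha
      subst hae
      have hptail : PathFromTo Q p (Q.h e) v := by
        refine ⟨hp.1.tail, ?_⟩
        cases p with
        | nil =>
          have hbe : e = b := by simpa using hb
          subst hbe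
          exact Or.inl ⟨rfl, hhb⟩
        | cons f q =>
          refine Or.inr ⟨f, b, rfl, ?_, ?_, hhb⟩
          · simpa [List.getLast?_cons_cons] using hb
          · exact ((List.isChain_cons_cons.mp hp.1).1).symm
      have hIH := ih (Q.h e) v hptail
      rcases he : φ e with _ | e'
      · rw [List.filterMap_cons_none he]
        have : ρ (Q.t e) = ρ (Q.h e) := hc.2.1 e he
        rw [← hta, this]
        exact hIH
      · obtain ⟨ht', hh'⟩ := hc.1 e e' he
        rw [List.filterMap_cons_some he]
        obtain ⟨hch, hor⟩ := hIH
        rcases hor with ⟨hnil, heq⟩ | ⟨a', b', ha', hb', hta', hhb'⟩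
        · rw [hnil]
          refine ⟨List.isChain_singleton _, Or.inr ⟨e', e', rfl, rfl, ?_, ?_⟩⟩
          · rw [ht', hta]
          · rw [hh', heq]
        · cases hrest : p.filterMap φ with
          | nil => rw [hrest] at ha'; simp at ha'
          | cons a₀ rest =>
            rw [hrest] at ha' hb' hch
            have ha₀ : a₀ = a' := by simpa using ha'
            subst ha₀
            refine ⟨List.isChain_cons_cons.mpr ⟨?_, hch⟩, Or.inr ⟨e', b', rfl, ?_, ?_, hhb'⟩⟩
            · rw [hh', hta']
            · simpa [List.getLast?_cons_cons] using hb'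
            · rw [ht', hta]

lemma taubar_nil (Q' : QuiverData V' E') (U' : Set (List E'))
    (k : Type*) [CommSemiring k] [Finite E'] :
    taubar Q' U' k ([] : List E') = 1 := by
  unfold taubar nD
  have : (Finsupp.equivFunOnFinite.symm
      (fun D : {D : Set E' // IsSimpleMatching Q' U' D} =>
        ([] : List E').countP (fun e => decide (e ∈ D.1)))) = 0 := by
    rw [Equiv.symm_apply_eq]
    ext D
    simp
  rw [this, MvPolynomial.monomial_zero']
  simp

/-- for a contraction `ψ` of dimer algebras (modelled by `ρ, φ`),
the perfect-matching counts are compatible: for every perfect matching `D'` of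
`Q'` and path `p` of `Q`, `n_{D'}(ψ p) = n_{ψ⁻¹ D'}(p)`.  Moreover the `ψ`-image
of a cycle of `Q` is a cycle of `Q'`, so the `τ̄ψ`-image of any cycle of `Q` lies
in the cycle algebra `S'` of `A'`, giving the inclusion `S ⊆ S'`. -/
theorem stmt15 (k : Type*) [Field k] [Finite E] [Finite E']
    (Q : QuiverData V E) (Q' : QuiverData V' E')
    (U : Set (List E)) (U' : Set (List E'))
    (hdimer : IsDimer Q U) (hdimer' : IsDimer Q' U')
    (ρ : V → V') (φ : E → Option E') (hc : IsContractionMap Q Q' ρ φ)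
    (hU' : ∀ c ∈ U, c.filterMap φ ∈ U') :
    (∀ D' : Set E', IsPerfectMatching U' D' → ∀ p : List E, IsPath Q p →
      nD D' (p.filterMap φ) = nD {e : E | ∃ e' ∈ D', φ e = some e'} p) ∧
    (∀ p, IsCycle Q p → p.filterMap φ ≠ [] → IsCycle Q' (p.filterMap φ)) ∧
    Algebra.adjoin k
        {x : MvPolynomial {D : Set E' // IsSimpleMatching Q' U' D} k |
          ∃ p, IsCycle Q p ∧ x = taubar Q' U' k (p.filterMap φ)} ≤
      Algebra.adjoin k
        {x : MvPolynomial {D : Set E' // IsSimpleMatching Q' U' D} k |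
          ∃ q, IsCycle Q' q ∧ x = taubar Q' U' k q} := by
  have h2 : ∀ p, IsCycle Q p → p.filterMap φ ≠ [] → IsCycle Q' (p.filterMap φ) := by
    intro p hp hne
    obtain ⟨hpath, _, a, b, ha, hb, hba⟩ := hp
    have hft : PathFromTo Q p (Q.t a) (Q.h b) :=
      ⟨hpath, Or.inr ⟨a, b, ha, hb, rfl, rfl⟩⟩
    obtain ⟨hch, hor⟩ := pathFromTo_filterMap Q Q' ρ φ hc p _ _ hft
    rcases hor with ⟨h1, _⟩ | ⟨a', b', ha', hb', hta', hhb'⟩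
    · exact absurd h1 hne
    · exact ⟨hch, hne, a', b', ha', hb', by rw [hhb', hta', hba]⟩
  refine ⟨fun D' _ p _ => nD_filterMap D' φ p, h2, ?_⟩
  apply Algebra.adjoin_le
  rintro x ⟨p, hp, rfl⟩
  by_cases hne : p.filterMap φ = []
  · rw [hne, taubar_nil]
    exact one_mem _
  · exact Algebra.subset_adjoin ⟨p.filterMap φ, h2 p hp hne, rfl⟩
end
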